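/- Let t ranging over an interval where t⁴ > max(a⁴, b⁴, c⁴) for real constants a, b, c. Define f₁(t) = ((t⁴-b⁴)(t⁴-c⁴))^{1/4}/(t⁴-a⁴)^{1/4}, f₂(t) = ((t⁴-a⁴)(t⁴-c⁴))^{1/4}/(t⁴-b⁴)^{1/4}, f₃(t) = ((t⁴-a⁴)(t⁴-b⁴))^{1/4}/(t⁴-c⁴)^{1/4}, and f(t) = 2t³/((t⁴-a⁴)(t⁴-b⁴)(t⁴-c⁴))^{1/4}. Then d/dt(f₁f₂) = f f₃, d/dt(f₁f₃) = f f₂, and d/dt(f₂f₃) = f f₁. -/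

import Mathlib

/-! Near a point where `t⁴ - a⁴`, `t⁴ - b⁴`, `t⁴ - c⁴` are all positive, the fourth roots
combine to `f₁ f₂ = (t⁴ - c⁴)^(1/2)` and `f f₃ = 2t³ / (t⁴ - c⁴)^(1/2)`, which is the derivative
of the former. Permuting `a, b, c` gives the other two identities. -/

open Real Filter Topology

lemma rpow_quarter_mul_self {x : ℝ} (hx : 0 ≤ x) :
    x ^ ((1:ℝ)/4) * x ^ ((1:ℝ)/4) = x ^ ((1:ℝ)/2) := by
  rw [← rpow_add' hx (by norm_num)]
  norm_num

lemma hasDerivAt_rpow_half_pow_four_sub {d t : ℝ} (hd : d < t ^ 4) :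
    HasDerivAt (fun s : ℝ => (s ^ 4 - d) ^ ((1:ℝ)/2)) (2 * t ^ 3 / (t ^ 4 - d) ^ ((1:ℝ)/2)) t := by
  have hpos : 0 < t ^ 4 - d := sub_pos.2 hd
  convert ((hasDerivAt_pow 4 t).sub_const d).rpow_const (p := (1:ℝ)/2) (Or.inl hpos.ne') using 1
  have := (rpow_pos_of_pos hpos ((1:ℝ)/2)).ne'
  rw [show (1:ℝ)/2 - 1 = -(1/2) by norm_num, rpow_neg hpos.le]
  field_simp
  ring

lemma quarter_ratio_mul_quarter_ratio {p q r : ℝ} (hp : 0 < p) (hq : 0 < q) (hr : 0 ≤ r) :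
    (q * r) ^ ((1:ℝ)/4) / p ^ ((1:ℝ)/4) * ((p * r) ^ ((1:ℝ)/4) / q ^ ((1:ℝ)/4))
      = r ^ ((1:ℝ)/2) := by
  have := (rpow_pos_of_pos hp ((1:ℝ)/4)).ne'
  have := (rpow_pos_of_pos hq ((1:ℝ)/4)).ne'
  rw [mul_rpow hq.le hr, mul_rpow hp.le hr, ← rpow_quarter_mul_self hr]
  field_simp

lemma div_quarter_mul_quarter_ratio (x : ℝ) {p q r : ℝ} (hp : 0 < p) (hq : 0 < q) (hr : 0 < r) :
    x / (p * q * r) ^ ((1:ℝ)/4) * ((p * q) ^ ((1:ℝ)/4) / r ^ ((1:ℝ)/4))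
      = x / r ^ ((1:ℝ)/2) := by
  have := (rpow_pos_of_pos hp ((1:ℝ)/4)).ne'
  have := (rpow_pos_of_pos hq ((1:ℝ)/4)).ne'
  have := (rpow_pos_of_pos hr ((1:ℝ)/4)).ne'
  rw [mul_rpow (mul_pos hp hq).le hr.le, mul_rpow hp.le hq.le, ← rpow_quarter_mul_self hr.le]
  field_simp

lemma eventually_pow_four_gt {d t : ℝ} (hd : d < t ^ 4) : ∀ᶠ s in 𝓝 t, d < s ^ 4 :=
  ((continuous_pow 4).tendsto t).eventually (lt_mem_nhds hd)

lemma hasDerivAt_triaxial_product (a b c t : ℝ)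
    (hta : a ^ 4 < t ^ 4) (htb : b ^ 4 < t ^ 4) (htc : c ^ 4 < t ^ 4) :
    HasDerivAt (fun s => (((s ^ 4 - b ^ 4) * (s ^ 4 - c ^ 4)) ^ ((1:ℝ)/4) / (s ^ 4 - a ^ 4) ^ ((1:ℝ)/4)) *
        (((s ^ 4 - a ^ 4) * (s ^ 4 - c ^ 4)) ^ ((1:ℝ)/4) / (s ^ 4 - b ^ 4) ^ ((1:ℝ)/4)))
      ((2 * t ^ 3 / ((t ^ 4 - a ^ 4) * (t ^ 4 - b ^ 4) * (t ^ 4 - c ^ 4)) ^ ((1:ℝ)/4)) *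
        (((t ^ 4 - a ^ 4) * (t ^ 4 - b ^ 4)) ^ ((1:ℝ)/4) / (t ^ 4 - c ^ 4) ^ ((1:ℝ)/4))) t := by
  rw [div_quarter_mul_quarter_ratio _ (sub_pos.2 hta) (sub_pos.2 htb) (sub_pos.2 htc)]
  refine (hasDerivAt_rpow_half_pow_four_sub htc).congr_of_eventuallyEq ?_
  filter_upwards [eventually_pow_four_gt hta, eventually_pow_four_gt htb,
    eventually_pow_four_gt htc] with s hsa hsb hsc
  exact quarter_ratio_mul_quarter_ratio (sub_pos.2 hsa) (sub_pos.2 hsb) (sub_pos.2 hsc).le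

theorem stmt_13_general (a b c : ℝ) (t : ℝ)
    (hta : a ^ 4 < t ^ 4) (htb : b ^ 4 < t ^ 4) (htc : c ^ 4 < t ^ 4) :
    HasDerivAt (fun s => (((s ^ 4 - b ^ 4) * (s ^ 4 - c ^ 4)) ^ ((1:ℝ)/4) / (s ^ 4 - a ^ 4) ^ ((1:ℝ)/4)) *
        (((s ^ 4 - a ^ 4) * (s ^ 4 - c ^ 4)) ^ ((1:ℝ)/4) / (s ^ 4 - b ^ 4) ^ ((1:ℝ)/4)))
      ((2 * t ^ 3 / ((t ^ 4 - a ^ 4) * (t ^ 4 - b ^ 4) * (t ^ 4 - c ^ 4)) ^ ((1:ℝ)/4)) *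
        (((t ^ 4 - a ^ 4) * (t ^ 4 - b ^ 4)) ^ ((1:ℝ)/4) / (t ^ 4 - c ^ 4) ^ ((1:ℝ)/4))) t ∧
    HasDerivAt (fun s => (((s ^ 4 - b ^ 4) * (s ^ 4 - c ^ 4)) ^ ((1:ℝ)/4) / (s ^ 4 - a ^ 4) ^ ((1:ℝ)/4)) *
        (((s ^ 4 - a ^ 4) * (s ^ 4 - b ^ 4)) ^ ((1:ℝ)/4) / (s ^ 4 - c ^ 4) ^ ((1:ℝ)/4)))
      ((2 * t ^ 3 / ((t ^ 4 - a ^ 4) * (t ^ 4 - b ^ 4) * (t ^ 4 - c ^ 4)) ^ ((1:ℝ)/4)) *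
        (((t ^ 4 - a ^ 4) * (t ^ 4 - c ^ 4)) ^ ((1:ℝ)/4) / (t ^ 4 - b ^ 4) ^ ((1:ℝ)/4))) t ∧
    HasDerivAt (fun s => (((s ^ 4 - a ^ 4) * (s ^ 4 - c ^ 4)) ^ ((1:ℝ)/4) / (s ^ 4 - b ^ 4) ^ ((1:ℝ)/4)) *
        (((s ^ 4 - a ^ 4) * (s ^ 4 - b ^ 4)) ^ ((1:ℝ)/4) / (s ^ 4 - c ^ 4) ^ ((1:ℝ)/4)))
      ((2 * t ^ 3 / ((t ^ 4 - a ^ 4) * (t ^ 4 - b ^ 4) * (t ^ 4 - c ^ 4)) ^ ((1:ℝ)/4)) *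
        (((t ^ 4 - b ^ 4) * (t ^ 4 - c ^ 4)) ^ ((1:ℝ)/4) / (t ^ 4 - a ^ 4) ^ ((1:ℝ)/4))) t := by
  refine ⟨hasDerivAt_triaxial_product a b c t hta htb htc, ?_, ?_⟩
  · convert hasDerivAt_triaxial_product a c b t hta htc htb using 2 <;> ring_nf
  · convert hasDerivAt_triaxial_product b c a t htb htc hta using 2 <;> ring_nf

/-- the triaxial BGPP Bianchi IX functions
f₁ = ((t⁴-b⁴)(t⁴-c⁴))^{1/4}/(t⁴-a⁴)^{1/4} (etc.) and
f = 2t³/((t⁴-a⁴)(t⁴-b⁴)(t⁴-c⁴))^{1/4} satisfy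
(f₁f₂)' = f f₃, (f₁f₃)' = f f₂, (f₂f₃)' = f f₁. -/
theorem stmt_13 (a b c : ℝ) (t : ℝ) (ht : 0 < t)
    (hta : a ^ 4 < t ^ 4) (htb : b ^ 4 < t ^ 4) (htc : c ^ 4 < t ^ 4) :
    HasDerivAt (fun s => (((s ^ 4 - b ^ 4) * (s ^ 4 - c ^ 4)) ^ ((1:ℝ)/4) / (s ^ 4 - a ^ 4) ^ ((1:ℝ)/4)) *
        (((s ^ 4 - a ^ 4) * (s ^ 4 - c ^ 4)) ^ ((1:ℝ)/4) / (s ^ 4 - b ^ 4) ^ ((1:ℝ)/4)))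
      ((2 * t ^ 3 / ((t ^ 4 - a ^ 4) * (t ^ 4 - b ^ 4) * (t ^ 4 - c ^ 4)) ^ ((1:ℝ)/4)) *
        (((t ^ 4 - a ^ 4) * (t ^ 4 - b ^ 4)) ^ ((1:ℝ)/4) / (t ^ 4 - c ^ 4) ^ ((1:ℝ)/4))) t ∧
    HasDerivAt (fun s => (((s ^ 4 - b ^ 4) * (s ^ 4 - c ^ 4)) ^ ((1:ℝ)/4) / (s ^ 4 - a ^ 4) ^ ((1:ℝ)/4)) *
        (((s ^ 4 - a ^ 4) * (s ^ 4 - b ^ 4)) ^ ((1:ℝ)/4) / (s ^ 4 - c ^ 4) ^ ((1:ℝ)/4)))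
      ((2 * t ^ 3 / ((t ^ 4 - a ^ 4) * (t ^ 4 - b ^ 4) * (t ^ 4 - c ^ 4)) ^ ((1:ℝ)/4)) *
        (((t ^ 4 - a ^ 4) * (t ^ 4 - c ^ 4)) ^ ((1:ℝ)/4) / (t ^ 4 - b ^ 4) ^ ((1:ℝ)/4))) t ∧
    HasDerivAt (fun s => (((s ^ 4 - a ^ 4) * (s ^ 4 - c ^ 4)) ^ ((1:ℝ)/4) / (s ^ 4 - b ^ 4) ^ ((1:ℝ)/4)) *
        (((s ^ 4 - a ^ 4) * (s ^ 4 - b ^ 4)) ^ ((1:ℝ)/4) / (s ^ 4 - c ^ 4) ^ ((1:ℝ)/4)))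
      ((2 * t ^ 3 / ((t ^ 4 - a ^ 4) * (t ^ 4 - b ^ 4) * (t ^ 4 - c ^ 4)) ^ ((1:ℝ)/4)) *
        (((t ^ 4 - b ^ 4) * (t ^ 4 - c ^ 4)) ^ ((1:ℝ)/4) / (t ^ 4 - a ^ 4) ^ ((1:ℝ)/4))) t :=
  stmt_13_general a b c t hta htb htc
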